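/- Condensation entailment: if the constrained clause (C';π') is a condensation of the constrained clause (C;π), then (C;π) entails (C';π'), i.e., every Herbrand interpretation satisfying (C;π) also satisfies (C';π'). -/

import Mathlib

/- Common formalization of first-order clauses with straight dismatching
   constraints (SDC), following Teucke & Weidenbach,
   "Decidability of the Monadic Shallow Linear First-Order Fragment with
   Straight Dismatching Constraints". -/

set_option linter.unusedVariables false

namespace SDCPaper

/-- A first-order signature: function symbols and predicate symbols.
    (Symbols are applied to argument lists; arities are not fixed.) -/
structure Sig : Type 1 where
  Func : Type
  Pred : Type

variable {S : Sig}

/-- First-order terms; variables are indexed by natural numbers. -/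
inductive Term (S : Sig) : Type where
  | var : Nat → Term S
  | app : S.Func → List (Term S) → Term S

/-- Substitutions. -/
abbrev Subst (S : Sig) := Nat → Term S

/-- Applying a substitution to a term. -/
def Term.subst (σ : Subst S) : Term S → Term S
  | .var x => σ x
  | .app f ts => .app f (ts.attach.map fun t => Term.subst σ t.1)
  decreasing_by simp_wf; have := List.sizeOf_lt_of_mem t.2; omega

/-- The list of (occurrences of) variables of a term. -/
def Term.varList : Term S → List Nat
  | .var x => [x]
  | .app _ ts => (ts.attach.map fun t => Term.varList t.1).flatten
  decreasing_by simp_wf; have := List.sizeOf_lt_of_mem t.2; omega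

/-- Term depth: variables have depth 0, applications depth 1 + max of arguments. -/
def Term.depth : Term S → Nat
  | .var _ => 0
  | .app _ ts => ((ts.attach.map fun t => Term.depth t.1).foldr max 0) + 1
  decreasing_by simp_wf; have := List.sizeOf_lt_of_mem t.2; omega

/-- The subterm of `t` at a position (a sequence of argument indices), if any. -/
def Term.atPos : Term S → List Nat → Option (Term S)
  | t, [] => some t
  | Term.var _, _ :: _ => none
  | Term.app _ ts, i :: r => (ts[i]?).bind fun u => Term.atPos u r
  termination_by t p => p.length

/-- `r` is a position of the term `t`. -/
inductive Term.HasPos : Term S → List Nat → Prop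
  | nil (t : Term S) : Term.HasPos t []
  | cons (f : S.Func) (ts : List (Term S)) (i : Nat) (r : List Nat) (t : Term S) :
      ts[i]? = some t → Term.HasPos t r → Term.HasPos (.app f ts) (i :: r)

def Term.IsGround (t : Term S) : Prop := t.varList = []

def Term.Linear (t : Term S) : Prop := t.varList.Nodup

def Term.Shallow (t : Term S) : Prop := t.depth ≤ 1

/-- A term is complex if it is not a variable. -/
def Term.IsComplex : Term S → Prop
  | .var _ => False
  | .app _ _ => True

/-- A term is straight if it is a variable, or a function applied to
    pairwise distinct variables except for at most one straight argument. -/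
inductive Straight : Term S → Prop
  | var (x : Nat) : Straight (.var x)
  | allVars (f : S.Func) (ts : List (Term S)) :
      (∀ t ∈ ts, ∃ x, t = Term.var x) → ts.Nodup → Straight (.app f ts)
  | oneArg (f : S.Func) (ts₁ ts₂ : List (Term S)) (s : Term S) :
      Straight s →
      (∀ t ∈ ts₁ ++ ts₂, ∃ x, t = Term.var x) →
      (ts₁ ++ s :: ts₂).Nodup →
      Straight (.app f (ts₁ ++ s :: ts₂))

/-- `s` is a strict subterm of `t`. -/
inductive StrictSubterm : Term S → Term S → Prop
  | arg (s : Term S) (f : S.Func) (ts : List (Term S)) :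
      s ∈ ts → StrictSubterm s (.app f ts)
  | deep (s t : Term S) (f : S.Func) (ts : List (Term S)) :
      t ∈ ts → StrictSubterm s t → StrictSubterm s (.app f ts)

/-- Replacement of exactly one occurrence of the variable `x` by `x'`. -/
inductive ReplOne (x x' : Nat) : Term S → Term S → Prop
  | var : ReplOne x x' (.var x) (.var x')
  | app (f : S.Func) (ts₁ ts₂ : List (Term S)) (t t' : Term S) :
      ReplOne x x' t t' →
      ReplOne x x' (.app f (ts₁ ++ t :: ts₂)) (.app f (ts₁ ++ t' :: ts₂))

/-- The function symbol `f` occurs in the term. -/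
inductive FuncInTerm (f : S.Func) : Term S → Prop
  | head (ts : List (Term S)) : FuncInTerm f (.app f ts)
  | arg (g : S.Func) (ts : List (Term S)) (t : Term S) :
      t ∈ ts → FuncInTerm f t → FuncInTerm f (.app g ts)

/-- `t` is an instance of `s`. -/
def IsInstanceOf (t s : Term S) : Prop := ∃ σ : Subst S, t = s.subst σ

/-- The substitution `{x ↦ t}`. -/
def single (x : Nat) (t : Term S) : Subst S := fun y => if y = x then t else Term.var y

def IsGroundSubst (δ : Subst S) : Prop := ∀ x, (δ x).IsGround

/-! ### Atoms, literals and clauses -/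

/-- An atom: a predicate applied to a list of argument terms. -/
structure Atom (S : Sig) : Type where
  pred : S.Pred
  args : List (Term S)

def Atom.subst (σ : Subst S) (A : Atom S) : Atom S :=
  ⟨A.pred, A.args.map (Term.subst σ)⟩

def Atom.varList (A : Atom S) : List Nat := (A.args.map Term.varList).flatten

def Atom.IsGround (A : Atom S) : Prop := ∀ t ∈ A.args, t.IsGround

/-- A monadic atom has exactly one argument. -/
def Atom.Monadic (A : Atom S) : Prop := A.args.length = 1

def Atom.HasPos (A : Atom S) (r : List Nat) : Prop :=
  r = [] ∨ ∃ i rr, r = i :: rr ∧ ∃ t, A.args[i]? = some t ∧ Term.HasPos t rr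

/-- The argument subterm of an atom at a (non-empty) position. -/
def Atom.atPos (A : Atom S) : List Nat → Option (Term S)
  | [] => none
  | i :: r => (A.args[i]?).bind fun t => t.atPos r

def VarInAtom (x : Nat) (A : Atom S) : Prop := x ∈ A.varList

def IsVarAtom (A : Atom S) : Prop := ∃ x, A.args = [Term.var x]

/-- A clause `Γ → Δ`: multiset `ante` of negative atoms and multiset `succ`
    of positive atoms. -/
structure Clause (S : Sig) : Type where
  ante : Multiset (Atom S)
  succ : Multiset (Atom S)

def Clause.subst (σ : Subst S) (C : Clause S) : Clause S :=
  ⟨C.ante.map (Atom.subst σ), C.succ.map (Atom.subst σ)⟩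

def Clause.IsGround (C : Clause S) : Prop :=
  (∀ A ∈ C.ante, A.IsGround) ∧ (∀ A ∈ C.succ, A.IsGround)

/-- Equality of clauses modulo duplicate literal elimination. -/
def Clause.SameLits (C D : Clause S) : Prop :=
  (∀ A, A ∈ C.ante ↔ A ∈ D.ante) ∧ (∀ A, A ∈ C.succ ↔ A ∈ D.succ)

/-- A literal: a sign (`true` = positive) together with an atom. -/
abbrev Lit (S : Sig) := Bool × Atom S

/-- The literals of a clause. -/
def Clause.lits (C : Clause S) : Multiset (Lit S) :=
  C.ante.map (fun A => (false, A)) + C.succ.map (fun A => (true, A))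

def LitIn (L : Lit S) (C : Clause S) : Prop := L ∈ C.lits

/-! ### Straight dismatching constraints -/

/-- A straight dismatching constraint: either the trivially false constraint
    `⊥` or a conjunction of atomic constraints `t ≠ s` (pairs `(t, s)`). -/
inductive Constr (S : Sig) : Type where
  | bot : Constr S
  | conj : List (Term S × Term S) → Constr S

def Constr.and : Constr S → Constr S → Constr S
  | .bot, _ => .bot
  | .conj _, .bot => .bot
  | .conj a, .conj b => .conj (a ++ b)

/-- Instantiation of a constraint: substitutions apply to left-hand sides. -/
def Constr.subst (σ : Subst S) : Constr S → Constr S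
  | .bot => .bot
  | .conj cs => .conj (cs.map fun c => (c.1.subst σ, c.2))

/-- Depth of a constraint: maximal term depth of right-hand sides. -/
def Constr.depth : Constr S → Nat
  | .bot => 0
  | .conj cs => (cs.map fun c => c.2.depth).foldr max 0

/-- Well-formedness: right-hand sides straight, sides variable disjoint. -/
def Constr.WF : Constr S → Prop
  | .bot => True
  | .conj cs => ∀ c ∈ cs, Straight c.2 ∧ ∀ x ∈ c.1.varList, x ∉ c.2.varList

def Constr.HasVar (x : Nat) : Constr S → Prop
  | .bot => False
  | .conj cs => ∃ c ∈ cs, x ∈ c.1.varList ∨ x ∈ c.2.varList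

def Constr.HasFunc (f : S.Func) : Constr S → Prop
  | .bot => False
  | .conj cs => ∃ c ∈ cs, FuncInTerm f c.1 ∨ FuncInTerm f c.2

/-- `π'` contains a subset of the atomic constraints of `π`. -/
def Constr.Sub : Constr S → Constr S → Prop
  | .bot, .bot => True
  | .conj a, .conj b => ∀ c ∈ a, c ∈ b
  | _, _ => False

/-- A solution of a constraint: a grounding substitution making every
    left-hand side a non-instance of the corresponding right-hand side. -/
def Solves (δ : Subst S) : Constr S → Prop
  | .bot => False
  | .conj cs => IsGroundSubst δ ∧ ∀ c ∈ cs, ¬ IsInstanceOf (c.1.subst δ) c.2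

def Constr.Solvable (π : Constr S) : Prop := ∃ δ, Solves δ π

/-! ### Constraint normalization -/

/-- One step of the constraint normalization rewrite system. -/
inductive NormStep : Constr S → Constr S → Prop
  | funVar (pre post : List (Term S × Term S)) (f : S.Func) (ts : List (Term S)) (y : Nat) :
      NormStep (.conj (pre ++ (Term.app f ts, Term.var y) :: post)) .bot
  | funVars (pre post : List (Term S × Term S)) (f : S.Func) (ts ss : List (Term S)) :
      (∀ s ∈ ss, ∃ x, s = Term.var x) → ss.Nodup → ts.length = ss.length →
      NormStep (.conj (pre ++ (Term.app f ts, Term.app f ss) :: post)) .bot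
  | decomp (pre post : List (Term S × Term S)) (f : S.Func) (ts ss : List (Term S))
      (i : Nat) (hts : i < ts.length) (hss : i < ss.length) :
      ts.length = ss.length → (ss.get ⟨i, hss⟩).IsComplex →
      NormStep (.conj (pre ++ (Term.app f ts, Term.app f ss) :: post))
               (.conj (pre ++ (ts.get ⟨i, hts⟩, ss.get ⟨i, hss⟩) :: post))
  | clash (pre post : List (Term S × Term S)) (f g : S.Func) (ts ss : List (Term S)) :
      f ≠ g →
      NormStep (.conj (pre ++ (Term.app f ts, Term.app g ss) :: post)) (.conj (pre ++ post))
  | subsume (pre mid post : List (Term S × Term S)) (x : Nat) (s : Term S) (σ : Subst S) :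
      NormStep (.conj (pre ++ (Term.var x, s) :: mid ++ (Term.var x, Term.subst σ s) :: post))
               (.conj (pre ++ (Term.var x, s) :: mid ++ post))
  | subsume' (pre mid post : List (Term S × Term S)) (x : Nat) (s : Term S) (σ : Subst S) :
      NormStep (.conj (pre ++ (Term.var x, Term.subst σ s) :: mid ++ (Term.var x, s) :: post))
               (.conj (pre ++ (Term.var x, s) :: mid ++ post))

def InNormalForm (π : Constr S) : Prop := ∀ π', ¬ NormStep π π'

/-- `π'` is the normal form of `π` under constraint normalization. -/
def IsNormOf (π' π : Constr S) : Prop :=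
  Relation.ReflTransGen NormStep π π' ∧ InNormalForm π'

/-! ### Constrained clauses and Herbrand semantics -/

/-- A constrained clause `(C; π)`. -/
abbrev CClause (S : Sig) := Clause S × Constr S

def CClause.subst (σ : Subst S) (c : CClause S) : CClause S :=
  (c.1.subst σ, c.2.subst σ)

/-- The ground instances of a constrained clause. -/
def groundOf (c : CClause S) : Set (Clause S) :=
  {D | ∃ δ, Solves δ c.2 ∧ D = c.1.subst δ}

/-- A Herbrand interpretation: a set of (ground) atoms. -/
abbrev HIntp (S : Sig) := Set (Atom S)

def SatGround (I : HIntp S) (C : Clause S) : Prop :=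
  (∃ A ∈ C.succ, A ∈ I) ∨ (∃ A ∈ C.ante, A ∉ I)

def SatCC (I : HIntp S) (c : CClause S) : Prop := ∀ D ∈ groundOf c, SatGround I D

def SatSet (I : HIntp S) (N : Set (CClause S)) : Prop := ∀ c ∈ N, SatCC I c

def Satisfiable (N : Set (CClause S)) : Prop := ∃ I, SatSet I N

def groundN (N : Set (CClause S)) : Set (Clause S) := {D | ∃ c ∈ N, D ∈ groundOf c}

def CClause.HasVar (x : Nat) (c : CClause S) : Prop :=
  (∃ A ∈ c.1.ante, VarInAtom x A) ∨ (∃ A ∈ c.1.succ, VarInAtom x A) ∨ c.2.HasVar x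

def Atom.HasFunc (f : S.Func) (A : Atom S) : Prop := ∃ t ∈ A.args, FuncInTerm f t

def CClause.HasFunc (f : S.Func) (c : CClause S) : Prop :=
  (∃ A ∈ c.1.ante, A.HasFunc f) ∨ (∃ A ∈ c.1.succ, A.HasFunc f) ∨ c.2.HasFunc f

def CClause.HasPred (P : S.Pred) (c : CClause S) : Prop :=
  (∃ A ∈ c.1.ante, A.pred = P) ∨ (∃ A ∈ c.1.succ, A.pred = P)

def PredInSet (P : S.Pred) (N : Set (CClause S)) : Prop := ∃ c ∈ N, c.HasPred P

def FuncInSet (f : S.Func) (N : Set (CClause S)) : Prop := ∃ c ∈ N, c.HasFunc f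

/-- Equality of constraints modulo duplicate atomic constraints. -/
def Constr.SameAtoms : Constr S → Constr S → Prop
  | .bot, .bot => True
  | .conj a, .conj b => ∀ p, p ∈ a ↔ p ∈ b
  | _, _ => False

/-- Equality of constrained clauses modulo duplicate literal elimination. -/
def CClause.EqModDup (c d : CClause S) : Prop :=
  c.1.SameLits d.1 ∧ Constr.SameAtoms c.2 d.2

/-- `D` is a ground instance of `(C;π)` modulo duplicate literal elimination. -/
def GroundInstanceModDup (D : Clause S) (c : CClause S) : Prop :=
  ∃ δ, Solves δ c.2 ∧ Clause.SameLits D (c.1.subst δ)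

/-- `c` is an instance of `c'` (modulo duplicate literal elimination). -/
def InstanceOfCCModDup (c c' : CClause S) : Prop :=
  ∀ D ∈ groundOf c, ∃ D' ∈ groundOf c', Clause.SameLits D D'

/-! ### Unification -/

def IsUnifier (σ : Subst S) (A B : Atom S) : Prop := A.subst σ = B.subst σ

/-- `σ` is a most general unifier of atoms `A` and `B`. -/
def IsMGU (σ : Subst S) (A B : Atom S) : Prop :=
  IsUnifier σ A B ∧
  ∀ τ : Subst S, IsUnifier τ A B → ∃ ρ : Subst S, ∀ x, τ x = (σ x).subst ρ

/-! ### Orderings -/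

/-- Dershowitz-Manna multiset extension (strict). -/
def MulLT {α : Type} (r : α → α → Prop) (M N : Multiset α) : Prop :=
  ∃ X Y Z, N = Z + X ∧ M = Z + Y ∧ X ≠ 0 ∧ ∀ y ∈ Y, ∃ x ∈ X, r y x

/-- Multiset encoding of literals: `A ↦ {A}`, `¬A ↦ {A, A}`. -/
def litMS : Lit S → Multiset (Atom S)
  | (true, A) => {A}
  | (false, A) => {A, A}

/-- The literal ordering induced by an atom ordering. -/
def LitLT (r : Atom S → Atom S → Prop) (L L' : Lit S) : Prop :=
  MulLT r (litMS L) (litMS L')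

def LitLE (r : Atom S → Atom S → Prop) (L L' : Lit S) : Prop :=
  LitLT r L L' ∨ L = L'

/-- The clause ordering: multiset extension of the literal ordering. -/
def ClauseLT (r : Atom S → Atom S → Prop) (C D : Clause S) : Prop :=
  MulLT (LitLT r) C.lits D.lits

/-- An atom ordering: irreflexive, transitive, total on ground atoms,
    and well-founded. -/
structure AtomOrder (S : Sig) : Type 1 where
  lt : Atom S → Atom S → Prop
  irrefl : ∀ A, ¬ lt A A
  trans : ∀ A B C, lt A B → lt B C → lt A C
  total : ∀ A B, A.IsGround → B.IsGround → lt A B ∨ lt B A ∨ A = B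
  wf : WellFounded lt

/-- The ordering condition of Section 3: a literal `¬Q(s)` is never greater
    than a literal `P(t[s]ₚ)` for `p ≠ ε`. -/
def SelOrderCond (ord : AtomOrder S) : Prop :=
  ∀ (P Q : S.Pred) (s t : Term S), StrictSubterm s t →
    ¬ LitLT ord.lt ((true, ⟨P, [t]⟩) : Lit S) ((false, ⟨Q, [s]⟩) : Lit S)

/-! ### Selection and the inference rules -/

def VarInSucc (x : Nat) (C : Clause S) : Prop := ∃ A ∈ C.succ, VarInAtom x A

/-- The superposition selection function `sel` (Definition 2). -/
def Selected (C : Clause S) (A : Atom S) : Prop :=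
  A ∈ C.ante ∧
  ( (¬ IsVarAtom A)
    ∨ ((∀ B ∈ C.ante, IsVarAtom B) ∧ ∃ x, A.args = [Term.var x] ∧ ¬ VarInSucc x C)
    ∨ ((∀ B ∈ C.ante, ∃ y, B.args = [Term.var y] ∧ VarInSucc y C) ∧
       (∃ x, A.args = [Term.var x] ∧ ∃ B ∈ C.succ, B.args = [Term.var x])) )

def NoSel (C : Clause S) : Prop := ∀ A, ¬ Selected C A

/-- `A` is strictly maximal w.r.t. the remaining clause `rest` under
    constraint `π` (Definition 3). -/
def StrictlyMaxIn (r : Atom S → Atom S → Prop) (A : Atom S) (rest : Clause S) (π : Constr S) : Prop :=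
  ∃ δ, Solves δ π ∧ ∀ L ∈ (rest.subst δ).lits, LitLT r L (true, A.subst δ)

def MaxIn (r : Atom S → Atom S → Prop) (A : Atom S) (rest : Clause S) (π : Constr S) : Prop :=
  ∃ δ, Solves δ π ∧ ∀ L ∈ (rest.subst δ).lits, LitLE r L (true, A.subst δ)

def MaxNegIn (r : Atom S → Atom S → Prop) (B : Atom S) (rest : Clause S) (π : Constr S) : Prop :=
  ∃ δ, Solves δ π ∧ ∀ L ∈ (rest.subst δ).lits, LitLE r L (false, B.subst δ)

/-- SDC-Resolution (Definition 4). -/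
def IsResolvent (r : Atom S → Atom S → Prop) (p1 p2 concl : CClause S) : Prop :=
  ∃ (Γ₁ Δ₁ Γ₂ Δ₂ : Multiset (Atom S)) (A B : Atom S) (π₁ π₂ π : Constr S) (σ : Subst S),
    p1 = (⟨Γ₁, A ::ₘ Δ₁⟩, π₁) ∧
    p2 = (⟨B ::ₘ Γ₂, Δ₂⟩, π₂) ∧
    IsMGU σ A B ∧
    IsNormOf π ((π₁.and π₂).subst σ) ∧
    π.Solvable ∧
    StrictlyMaxIn r (A.subst σ) (Clause.subst σ ⟨Γ₁, Δ₁⟩) (π₁.subst σ) ∧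
    NoSel ⟨Γ₁, A ::ₘ Δ₁⟩ ∧
    (Selected ⟨B ::ₘ Γ₂, Δ₂⟩ B ∨
      (NoSel ⟨B ::ₘ Γ₂, Δ₂⟩ ∧ MaxNegIn r (B.subst σ) (Clause.subst σ ⟨Γ₂, Δ₂⟩) (π₂.subst σ))) ∧
    concl = (Clause.subst σ ⟨Γ₁ + Γ₂, Δ₁ + Δ₂⟩, π)

/-- SDC-Factoring (Definition 5). -/
def IsFactor (r : Atom S → Atom S → Prop) (p concl : CClause S) : Prop :=
  ∃ (Γ Δ : Multiset (Atom S)) (A B : Atom S) (π π' : Constr S) (σ : Subst S),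
    p = (⟨Γ, A ::ₘ B ::ₘ Δ⟩, π) ∧
    IsMGU σ A B ∧
    NoSel ⟨Γ, A ::ₘ B ::ₘ Δ⟩ ∧
    MaxIn r (A.subst σ) (Clause.subst σ ⟨Γ, B ::ₘ Δ⟩) (π.subst σ) ∧
    IsNormOf π' (π.subst σ) ∧
    π'.Solvable ∧
    concl = (Clause.subst σ ⟨Γ, A ::ₘ Δ⟩, π')

/-- Redundancy of a constrained clause in a clause set. -/
def RedundantIn (r : Atom S → Atom S → Prop) (c : CClause S) (N : Set (CClause S)) : Prop :=
  ∀ D ∈ groundOf c, ∃ L : List (Clause S),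
    (∀ D' ∈ L, D' ∈ groundN N ∧ ClauseLT r D' D) ∧
    ∀ I : HIntp S, (∀ D' ∈ L, SatGround I D') → SatGround I D

/-- Saturation up to redundancy (Definition 7). -/
def SaturatedUR (r : Atom S → Atom S → Prop) (N : Set (CClause S)) : Prop :=
  (∀ p1 ∈ N, ∀ p2 ∈ N, ∀ c, IsResolvent r p1 p2 c →
     RedundantIn r c N ∨ groundOf c ⊆ groundN N) ∧
  (∀ p ∈ N, ∀ c, IsFactor r p c → RedundantIn r c N ∨ groundOf c ⊆ groundN N)

/-! ### Partial minimal model construction (Definition 9) -/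

def ProducedAtoms (r : Atom S → Atom S → Prop) (G : Set (Clause S))
    (prod : Clause S → Set (Atom S)) (D : Clause S) : HIntp S :=
  {A | ∃ D' ∈ G, ClauseLT r D' D ∧ A ∈ prod D'}

/-- `prod` assigns to each ground clause its produced atoms according to the
    superposition partial model construction. -/
def IsModelConstruction (r : Atom S → Atom S → Prop) (G : Set (Clause S))
    (prod : Clause S → Set (Atom S)) : Prop :=
  (∀ D, D ∉ G → prod D = ∅) ∧
  ∀ D ∈ G, prod D =
    {A | ∃ Δ, D.succ = A ::ₘ Δ ∧
      (∀ L ∈ (Clause.lits ⟨D.ante, Δ⟩), LitLT r L (true, A)) ∧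
      NoSel D ∧ ¬ SatGround (ProducedAtoms r G prod D) D}

def ConstructedModel (G : Set (Clause S)) (prod : Clause S → Set (Atom S)) : HIntp S :=
  {A | ∃ D ∈ G, A ∈ prod D}

/-! ### The MSL(SDC) fragment -/

/-- MSL clauses: monadic predicates, positive literals shallow and linear,
    positive atoms pairwise variable disjoint (no equations occur,
    since atoms are predicate atoms). -/
def IsMSL (C : Clause S) : Prop :=
  (∀ A ∈ C.ante, A.Monadic) ∧ (∀ A ∈ C.succ, A.Monadic) ∧
  (∀ A ∈ C.succ, ∀ t ∈ A.args, t.depth ≤ 1) ∧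
  Multiset.Nodup ((C.succ.map (fun A => (A.varList : Multiset Nat))).sum)

def IsMSLSDC (c : CClause S) : Prop := IsMSL c.1 ∧ c.2.WF

/-! ### Condensation -/

/-- `(C';π')` is a condensation of `(C;π)`. -/
def Condensation (c' c : CClause S) : Prop :=
  (c'.1.ante ≤ c.1.ante ∧ c'.1.succ ≤ c.1.succ ∧ c'.1 ≠ c.1) ∧
  ∃ σ : Subst S,
    c.2.subst σ = c'.2 ∧ Constr.Sub c'.2 c.2 ∧
    (∀ A ∈ c.1.ante, ∃ A' ∈ c'.1.ante, A.subst σ = A') ∧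
    (∀ A ∈ c.1.succ, ∃ A' ∈ c'.1.succ, A.subst σ = A')

/-! ### The approximation transformations -/

open Classical in
/-- Monadic projection of an atom: `P(t⃗) ↦ T(f_P(t⃗))`. -/
noncomputable def projAtom (P T : S.Pred) (fP : S.Func) (A : Atom S) : Atom S :=
  if A.pred = P then ⟨T, [Term.app fP A.args]⟩ else A

noncomputable def projClause (P T : S.Pred) (fP : S.Func) (C : Clause S) : Clause S :=
  ⟨C.ante.map (projAtom P T fP), C.succ.map (projAtom P T fP)⟩

noncomputable def projCC (P T : S.Pred) (fP : S.Func) (c : CClause S) : CClause S :=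
  (projClause P T fP c.1, c.2)

/-- The Monadic transformation step. -/
def MonadicStep (P T : S.Pred) (fP : S.Func) (N N' : Set (CClause S)) : Prop :=
  P ≠ T ∧
  (∃ c ∈ N, ∃ A ∈ c.1.ante + c.1.succ, A.pred = P ∧ ¬ A.Monadic) ∧
  ¬ PredInSet T N ∧ ¬ FuncInSet fP N ∧
  N' = projCC P T fP '' N

/-- The term `f(t⃗₁, s, t⃗₂)` in which `s` occurs at depth one. -/
def shETerm (f : S.Func) (ts₁ ts₂ : List (Term S)) (s : Term S) : Term S :=
  .app f (ts₁ ++ s :: ts₂)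

/-- The atom `E[s]ₚ` with `|p| = 2`. -/
def shEAtom (Pr : S.Pred) (as₁ as₂ : List (Term S)) (f : S.Func)
    (ts₁ ts₂ : List (Term S)) (s : Term S) : Atom S :=
  ⟨Pr, as₁ ++ shETerm f ts₁ ts₂ s :: as₂⟩

/-- The clause `(Γ → E[s]ₚ, Δ; π)`. -/
def shSrc (Γ Δ : Multiset (Atom S)) (π : Constr S) (Pr : S.Pred)
    (as₁ as₂ ts₁ ts₂ : List (Term S)) (f : S.Func) (s : Term S) : CClause S :=
  (⟨Γ, shEAtom Pr as₁ as₂ f ts₁ ts₂ s ::ₘ Δ⟩, π)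

/-- The left result `(S(x), Γₗ → E[p/x], Δₗ; π)` of the Shallow transformation. -/
def shLeft (Γl Δl : Multiset (Atom S)) (π : Constr S) (Pr : S.Pred)
    (as₁ as₂ ts₁ ts₂ : List (Term S)) (f : S.Func) (Sp : S.Pred) (x : Nat) : CClause S :=
  (⟨(⟨Sp, [Term.var x]⟩ : Atom S) ::ₘ Γl,
    shEAtom Pr as₁ as₂ f ts₁ ts₂ (Term.var x) ::ₘ Δl⟩, π)

/-- The right result `(Γᵣ → S(s), Δᵣ; π)` of the Shallow transformation. -/
def shRight (Γr Δr : Multiset (Atom S)) (π : Constr S) (s : Term S) (Sp : S.Pred) : CClause S :=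
  (⟨Γr, (⟨Sp, [s]⟩ : Atom S) ::ₘ Δr⟩, π)

/-- Side conditions of the Shallow transformation. -/
def ShallowCond (N : Set (CClause S)) (Γ Δ Γl Γr Δl Δr : Multiset (Atom S)) (π : Constr S)
    (Pr : S.Pred) (as₁ as₂ ts₁ ts₂ : List (Term S)) (f : S.Func) (s : Term S)
    (Sp : S.Pred) (x : Nat) : Prop :=
  s.IsComplex ∧
  ¬ PredInSet Sp N ∧
  ¬ (shSrc Γ Δ π Pr as₁ as₂ ts₁ ts₂ f s).HasVar x ∧
  Γl.map (Atom.subst (single x s)) + Γr = Γ ∧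
  Δl + Δr = Δ ∧
  (∀ (Q : S.Pred) (y : Nat), (⟨Q, [Term.var y]⟩ : Atom S) ∈ Γ →
     (VarInAtom y (shEAtom Pr as₁ as₂ f ts₁ ts₂ (Term.var x)) ∨ ∃ B ∈ Δl, VarInAtom y B) →
     (⟨Q, [Term.var y]⟩ : Atom S) ∈ Γl) ∧
  (∀ (Q : S.Pred) (y : Nat), (⟨Q, [Term.var y]⟩ : Atom S) ∈ Γ →
     (y ∈ s.varList ∨ ∃ B ∈ Δr, VarInAtom y B) →
     (⟨Q, [Term.var y]⟩ : Atom S) ∈ Γr)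

/-- Replacement of one occurrence of variable `x` by `x'` in an atom. -/
def ReplOneAtom (x x' : Nat) (A A' : Atom S) : Prop :=
  ∃ (P : S.Pred) (as₁ as₂ : List (Term S)) (t t' : Term S),
    A = ⟨P, as₁ ++ t :: as₂⟩ ∧ A' = ⟨P, as₁ ++ t' :: as₂⟩ ∧ ReplOne x x' t t'

/-- The clause `(Γ → E, Δ; π)` transformed by the Linear transformation. -/
def liSrc (Γ Δ : Multiset (Atom S)) (π : Constr S) (E : Atom S) : CClause S :=
  (⟨Γ, E ::ₘ Δ⟩, π)

/-- The result `(Γσ, Γ → E', Δ; π ∧ πσ)` of the Linear transformation,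
    `σ = {x ↦ x'}`. -/
def liRes (Γ Δ : Multiset (Atom S)) (π : Constr S) (E' : Atom S) (x x' : Nat) : CClause S :=
  (⟨Γ.map (Atom.subst (single x (Term.var x'))) + Γ, E' ::ₘ Δ⟩,
   π.and (π.subst (single x (Term.var x'))))

/-- Side conditions of the Linear transformations (both variants): one
    occurrence of the repeated succedent variable `x` is replaced by fresh `x'`. -/
def LinearCond (Γ Δ : Multiset (Atom S)) (π : Constr S) (E E' : Atom S) (x x' : Nat) : Prop :=
  ReplOneAtom x x' E E' ∧
  ¬ (liSrc Γ Δ π E).HasVar x' ∧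
  (VarInAtom x E' ∨ ∃ A ∈ Δ, VarInAtom x A)

/-- The first result `(C; π ∧ x ≠ t)` of the Refinement transformation. -/
def refLeft (c : CClause S) (x : Nat) (t : Term S) : CClause S :=
  (c.1, c.2.and (.conj [(Term.var x, t)]))

/-- The second result `(C;π){x ↦ t}` of the Refinement transformation. -/
def refRight (c : CClause S) (x : Nat) (t : Term S) : CClause S :=
  CClause.subst (single x t) c

/-- Side conditions of the Refinement transformation. -/
def RefineClause (c : CClause S) (x : Nat) (t : Term S) : Prop :=
  ((∃ A ∈ c.1.ante, VarInAtom x A) ∨ ∃ A ∈ c.1.succ, VarInAtom x A) ∧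
  Straight t ∧
  (∀ y ∈ t.varList, ¬ c.HasVar y)

/-- The data of a single approximation transformation step. -/
inductive StepData (S : Sig) : Type 1 where
  | mo (P T : S.Pred) (fP : S.Func)
  | sh (Γ Δ : Multiset (Atom S)) (π : Constr S) (Pr : S.Pred)
       (as₁ as₂ ts₁ ts₂ : List (Term S)) (f : S.Func) (s : Term S)
       (Sp : S.Pred) (x : Nat) (Γl Γr Δl Δr : Multiset (Atom S))
  | li (Γ Δ : Multiset (Atom S)) (π : Constr S) (E E' : Atom S) (x x' : Nat)
  | ref (c : CClause S) (x : Nat) (t : Term S)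

/-- One step of the approximation rewrite system `⇒_AP` on clause sets,
    labelled with its data. -/
inductive DStep : Set (CClause S) → StepData S → Set (CClause S) → Prop
  | mo (N N' : Set (CClause S)) (P T : S.Pred) (fP : S.Func) :
      MonadicStep P T fP N N' → DStep N (.mo P T fP) N'
  | sh (M : Set (CClause S)) (Γ Δ Γl Γr Δl Δr : Multiset (Atom S)) (π : Constr S)
      (Pr : S.Pred) (as₁ as₂ ts₁ ts₂ : List (Term S)) (f : S.Func) (s : Term S)
      (Sp : S.Pred) (x : Nat) :
      shSrc Γ Δ π Pr as₁ as₂ ts₁ ts₂ f s ∉ M →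
      ShallowCond (insert (shSrc Γ Δ π Pr as₁ as₂ ts₁ ts₂ f s) M)
        Γ Δ Γl Γr Δl Δr π Pr as₁ as₂ ts₁ ts₂ f s Sp x →
      DStep (insert (shSrc Γ Δ π Pr as₁ as₂ ts₁ ts₂ f s) M)
        (.sh Γ Δ π Pr as₁ as₂ ts₁ ts₂ f s Sp x Γl Γr Δl Δr)
        (insert (shLeft Γl Δl π Pr as₁ as₂ ts₁ ts₂ f Sp x)
          (insert (shRight Γr Δr π s Sp) M))
  | li (M : Set (CClause S)) (Γ Δ : Multiset (Atom S)) (π : Constr S)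
      (E E' : Atom S) (x x' : Nat) :
      liSrc Γ Δ π E ∉ M → LinearCond Γ Δ π E E' x x' →
      DStep (insert (liSrc Γ Δ π E) M) (.li Γ Δ π E E' x x')
        (insert (liRes Γ Δ π E' x x') M)
  | ref (M : Set (CClause S)) (c : CClause S) (x : Nat) (t : Term S) :
      c ∉ M → RefineClause c x t →
      DStep (insert c M) (.ref c x t)
        (insert (refLeft c x t) (insert (refRight c x t) M))

/-- Priority class of a rule: Refinement 0 > Monadic 1 > Shallow 2 > Linear 3. -/
def StepData.rule : StepData S → Nat
  | .ref _ _ _ => 0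
  | .mo _ _ _ => 1
  | .sh _ _ _ _ _ _ _ _ _ _ _ _ _ _ _ _ => 2
  | .li _ _ _ _ _ _ _ => 3

def RuleApplicable (k : Nat) (N : Set (CClause S)) : Prop :=
  ∃ d N', DStep N d N' ∧ StepData.rule d = k

/-- A `⇒_AP` step respecting the rule priorities
    Refinement > Monadic > Shallow > Linear. -/
def APStepPrio (N : Set (CClause S)) (d : StepData S) (N' : Set (CClause S)) : Prop :=
  DStep N d N' ∧
  (d.rule = 2 → ¬ RuleApplicable 1 N) ∧
  (d.rule = 3 → ¬ RuleApplicable 1 N ∧ ¬ RuleApplicable 2 N)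

/-- A finite sequence of approximation steps. -/
inductive DChain : Set (CClause S) → List (StepData S) → Set (CClause S) → Prop
  | nil (N : Set (CClause S)) : DChain N [] N
  | cons {N N' N'' : Set (CClause S)} (d : StepData S) (ls : List (StepData S)) :
      DStep N d N' → DChain N' ls N'' → DChain N (d :: ls) N''

/-- Reverse monadic projection of an interpretation along an approximation
    sequence: each encoded atom `T(f_P(t⃗))` is replaced back by `P(t⃗)`. -/
noncomputable def revProj : List (StepData S) → HIntp S → HIntp S
  | [], I => I
  | (StepData.mo P T fP) :: ls, I => projAtom P T fP ⁻¹' (revProj ls I)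
  | _ :: ls, I => revProj ls I

/-! ### Conflicting cores -/

/-- A (complete) ground conflicting core of a clause set `N`. -/
def IsGroundConflCore (Nb : Set (Clause S)) (N : Set (CClause S)) : Prop :=
  Nb.Finite ∧ (∀ D ∈ Nb, D.IsGround) ∧
  (¬ ∃ I : HIntp S, ∀ D ∈ Nb, SatGround I D) ∧
  (∀ D ∈ Nb, ∃ c ∈ N, GroundInstanceModDup D c)

def CompleteCore (Nb : Set (Clause S)) : Prop :=
  (∀ D ∈ Nb, ∀ A ∈ D.ante, ∃ D' ∈ Nb, A ∈ D'.succ) ∧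
  (∀ D ∈ Nb, ∀ A ∈ D.succ, ∃ D' ∈ Nb, A ∈ D'.ante)

/-- A conflicting core `(N^⊥; π)` of a constrained clause set (Definition 15). -/
def IsConflictingCore (Nb : Set (Clause S)) (π : Constr S) (N : Set (CClause S)) : Prop :=
  Nb.Finite ∧ π.Solvable ∧
  (∀ δ, Solves δ π → ¬ ∃ I : HIntp S, ∀ D ∈ Nb, SatGround I (D.subst δ)) ∧
  (∀ D ∈ Nb, ∃ c ∈ N, InstanceOfCCModDup (D, π) c)

/-- Lift-conflicts (Definition 17). -/
def IsLiftConflict (d : StepData S) (Nb : Set (Clause S)) (Cc : Clause S) : Prop :=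
  match d with
  | .li Γ Δ π E E' x x' =>
      Cc ∈ Nb ∧ GroundInstanceModDup Cc (liRes Γ Δ π E' x x') ∧
      ¬ GroundInstanceModDup Cc (liSrc Γ Δ π E)
  | .sh Γ Δ π Pr as₁ as₂ ts₁ ts₂ f s Sp x Γl Γr Δl Δr =>
      (∃ δl δr : Subst S, Solves δl π ∧ Solves δr π ∧
         Clause.subst δl (shLeft Γl Δl π Pr as₁ as₂ ts₁ ts₂ f Sp x).1 ∈ Nb ∧
         Clause.subst δr (shRight Γr Δr π s Sp).1 ∈ Nb ∧
         δl x = s.subst δr ∧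
         Cc = ⟨Γl.map (Atom.subst δl) + Γr.map (Atom.subst δr),
               Atom.subst δl (shEAtom Pr as₁ as₂ f ts₁ ts₂ (Term.var x)) ::ₘ
                 (Δl.map (Atom.subst δl) + Δr.map (Atom.subst δr))⟩) ∧
      ¬ GroundInstanceModDup Cc (shSrc Γ Δ π Pr as₁ as₂ ts₁ ts₂ f s)
  | _ => False

/-! ### Parent and ancestor relations -/

/-- The clause is not the one transformed by the step. -/
def UnchangedBy : StepData S → CClause S → Prop
  | .mo _ _ _, _ => False
  | .sh Γ Δ π Pr as₁ as₂ ts₁ ts₂ f s _ _ _ _ _ _, c =>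
      c ≠ shSrc Γ Δ π Pr as₁ as₂ ts₁ ts₂ f s
  | .li Γ Δ π E _ _ _, c => c ≠ liSrc Γ Δ π E
  | .ref c0 _ _, c => c ≠ c0

/-- The parent clause relation (Definition 12, without shallow resolvents). -/
def PCrel (d : StepData S) (c c' : CClause S) : Prop :=
  (UnchangedBy d c ∧ c' = c) ∨
  match d with
  | .mo P T fP => c' = projCC P T fP c
  | .sh Γ Δ π Pr as₁ as₂ ts₁ ts₂ f s Sp x Γl Γr Δl Δr =>
      c = shSrc Γ Δ π Pr as₁ as₂ ts₁ ts₂ f s ∧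
      (c' = shLeft Γl Δl π Pr as₁ as₂ ts₁ ts₂ f Sp x ∨ c' = shRight Γr Δr π s Sp)
  | .li Γ Δ π E E' x x' => c = liSrc Γ Δ π E ∧ c' = liRes Γ Δ π E' x x'
  | .ref c0 x t => c = c0 ∧ (c' = refLeft c0 x t ∨ c' = refRight c0 x t)

/-- The parent variable relation (Definition 13). -/
def PV (d : StepData S) (c : CClause S) (x : Nat) (c' : CClause S) (y : Nat) : Prop :=
  (PCrel d c c' ∧ c.HasVar x ∧ c'.HasVar x ∧ y = x) ∨
  (match d with
   | .li Γ Δ π E E' x0 x0' =>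
       c = liSrc Γ Δ π E ∧ c' = liRes Γ Δ π E' x0 x0' ∧ x = x0 ∧ y = x0'
   | _ => False)

/-- The parent literal position relation (Definition 14). A literal position
    is a pair of a literal and a position within it. -/
def PLP (d : StepData S) (c : CClause S) (L : Lit S) (r : List Nat)
    (c' : CClause S) (L' : Lit S) (r' : List Nat) : Prop :=
  (UnchangedBy d c ∧ c' = c ∧ L' = L ∧ r' = r ∧ LitIn L c.1 ∧ L.2.HasPos r) ∨
  match d with
  | .mo P T fP =>
      c' = projCC P T fP c ∧ LitIn L c.1 ∧ L.2.HasPos r ∧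
      ((L.2.pred ≠ P ∧ L' = L ∧ r' = r) ∨
       (L.2.pred = P ∧ L' = (L.1, ⟨T, [Term.app fP L.2.args]⟩) ∧
         ((r = [] ∧ r' = []) ∨ ∃ i rr, r = i :: rr ∧ r' = 0 :: i :: rr)))
  | .sh Γ Δ π Pr as₁ as₂ ts₁ ts₂ f s Sp x Γl Γr Δl Δr =>
      c = shSrc Γ Δ π Pr as₁ as₂ ts₁ ts₂ f s ∧
      ( (c' = shLeft Γl Δl π Pr as₁ as₂ ts₁ ts₂ f Sp x ∧
          ( (L = (true, shEAtom Pr as₁ as₂ f ts₁ ts₂ s) ∧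
             L' = (true, shEAtom Pr as₁ as₂ f ts₁ ts₂ (Term.var x)) ∧
             r' = r ∧ (shEAtom Pr as₁ as₂ f ts₁ ts₂ (Term.var x)).HasPos r) ∨
            (L = (true, shEAtom Pr as₁ as₂ f ts₁ ts₂ s) ∧ r = [as₁.length, ts₁.length] ∧
             L' = (false, (⟨Sp, [Term.var x]⟩ : Atom S)) ∧
             (⟨Sp, [Term.var x]⟩ : Atom S).HasPos r') ∨
            (∃ A ∈ Γl, L = (false, A.subst (single x s)) ∧ L' = (false, A) ∧
               r' = r ∧ A.HasPos r) ∨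
            (∃ A ∈ Δl, L = (true, A) ∧ L' = (true, A) ∧ r' = r ∧ A.HasPos r))) ∨
        (c' = shRight Γr Δr π s Sp ∧
          ( (L = (true, shEAtom Pr as₁ as₂ f ts₁ ts₂ s) ∧ r = [as₁.length, ts₁.length] ∧
             L' = (true, (⟨Sp, [s]⟩ : Atom S)) ∧ r' = []) ∨
            (∃ rr, L = (true, shEAtom Pr as₁ as₂ f ts₁ ts₂ s) ∧
               r = as₁.length :: ts₁.length :: rr ∧
               L' = (true, (⟨Sp, [s]⟩ : Atom S)) ∧ r' = 0 :: rr ∧ Term.HasPos s rr) ∨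
            (∃ A ∈ Γr, L = (false, A) ∧ L' = (false, A) ∧ r' = r ∧ A.HasPos r) ∨
            (∃ A ∈ Δr, L = (true, A) ∧ L' = (true, A) ∧ r' = r ∧ A.HasPos r))) )
  | .li Γ Δ π E E' x x' =>
      c = liSrc Γ Δ π E ∧ c' = liRes Γ Δ π E' x x' ∧
      ( (L = (true, E) ∧ L' = (true, E') ∧ r' = r ∧ E'.HasPos r) ∨
        (∃ A ∈ Δ, L = (true, A) ∧ L' = (true, A) ∧ r' = r ∧ A.HasPos r) ∨
        (∃ A ∈ Γ, L = (false, A) ∧ L' = (false, A.subst (single x (Term.var x'))) ∧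
           r' = r ∧ A.HasPos r) ∨
        (∃ A ∈ Γ, L = (false, A) ∧ L' = (false, A) ∧ r' = r ∧ A.HasPos r) )
  | .ref c0 x t =>
      c = c0 ∧ LitIn L c.1 ∧ L.2.HasPos r ∧
      ( (c' = refLeft c0 x t ∧ L' = L ∧ r' = r) ∨
        (c' = refRight c0 x t ∧ L' = (L.1, L.2.subst (single x t)) ∧ r' = r) )

/-- Ancestor clause relation along an approximation sequence. -/
inductive AncC : List (StepData S) → CClause S → CClause S → Prop
  | nil (c : CClause S) : AncC [] c c
  | cons {d : StepData S} {ls : List (StepData S)} {c c' c'' : CClause S} :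
      PCrel d c c' → AncC ls c' c'' → AncC (d :: ls) c c''

/-- Ancestor literal position relation along an approximation sequence. -/
inductive AncLP : List (StepData S) → CClause S → Lit S → List Nat →
    CClause S → Lit S → List Nat → Prop
  | nil (c : CClause S) (L : Lit S) (r : List Nat) : AncLP [] c L r c L r
  | cons {d : StepData S} {ls : List (StepData S)} {c c' c'' : CClause S}
      {L L' L'' : Lit S} {r r' r'' : List Nat} :
      PLP d c L r c' L' r' → AncLP ls c' L' r' c'' L'' r'' →
      AncLP (d :: ls) c L r c'' L'' r''

/-- Ancestor variable relation along an approximation sequence. -/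
inductive AncV : List (StepData S) → CClause S → Nat → CClause S → Nat → Prop
  | nil (c : CClause S) (x : Nat) : AncV [] c x c x
  | cons {d : StepData S} {ls : List (StepData S)} {c c' c'' : CClause S}
      {x y z : Nat} :
      PV d c x c' y → AncV ls c' y c'' z → AncV (d :: ls) c x c'' z

/-! ### Constrained term skeletons and descendants -/

/-- One step of the constrained term skeleton transformation:
    `(t[x]_{p,q}; π) ⇒ (t[q/x']; π ∧ π{x ↦ x'})`. -/
inductive SktStep : Term S × Constr S → Term S × Constr S → Prop
  | step (t t' : Term S) (x x' : Nat) (π : Constr S) :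
      ReplOne x x' t t' → x ∈ t'.varList → x' ∉ t.varList → ¬ π.HasVar x' →
      SktStep (t, π) (t', π.and (π.subst (single x (Term.var x'))))

/-- `(u, π')` is the constrained term skeleton of `(t, π)`. -/
def IsSktOf (uπ tπ : Term S × Constr S) : Prop :=
  Relation.ReflTransGen SktStep tπ uπ ∧ ∀ z, ¬ SktStep uπ z

/-- Descendant relation (Definition 16): `D = C'δ` is a descendant of `(C;π)`
    and its literal `L'δ` maps to the literal position `(L, r)` of `(C;π)`. -/
def DescRel (ls : List (StepData S)) (c c' : CClause S) (δ : Subst S)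
    (Lg : Lit S) (L : Lit S) (r : List Nat) : Prop :=
  ∃ L' : Lit S, Lg = (L'.1, L'.2.subst δ) ∧ LitIn Lg (c'.1.subst δ) ∧
    AncLP ls c L r c' L' []

/-! ### Saturation steps (inference, condensation, variant removal) -/

inductive SatStep (r : Atom S → Atom S → Prop) : Set (CClause S) → Set (CClause S) → Prop
  | infer (N : Set (CClause S)) (c : CClause S) :
      (∃ p1 ∈ N, ∃ p2 ∈ N, IsResolvent r p1 p2 c) → SatStep r N (insert c N)
  | factor (N : Set (CClause S)) (c : CClause S) :
      (∃ p ∈ N, IsFactor r p c) → SatStep r N (insert c N)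
  | condense (N : Set (CClause S)) (c c' : CClause S) :
      c ∈ N → Condensation c' c → SatStep r N (insert c' (N \ {c}))
  | delVariant (N : Set (CClause S)) (c c' : CClause S) :
      c ∈ N → c' ∈ N → c ≠ c' → groundOf c = groundOf c' → SatStep r N (N \ {c})

/-- Variables shared between two constrained clauses. -/
def ShVar (c c' : CClause S) (v : Nat) : Prop := c.HasVar v ∧ c'.HasVar v

/-- The shallow ρ-resolvent (Definition 11):
    `(Γₗ{x ↦ sρ}, Γᵣρ → E[p/sρ], Δₗ, Δᵣρ; π ∧ πρ)`. -/
def shResolvent (Γl Γr Δl Δr : Multiset (Atom S)) (π : Constr S) (Pr : S.Pred)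
    (as₁ as₂ ts₁ ts₂ : List (Term S)) (f : S.Func) (s : Term S) (x : Nat)
    (ρ : Subst S) : CClause S :=
  (⟨Γl.map (Atom.subst (single x (s.subst ρ))) + Γr.map (Atom.subst ρ),
    shEAtom Pr as₁ as₂ f ts₁ ts₂ (s.subst ρ) ::ₘ (Δl + Δr.map (Atom.subst ρ))⟩,
   π.and (π.subst ρ))

/-! A condensation `(C';π')` of `(C;π)` comes with a substitution `σ` mapping `C` into `C'`
and `π` onto `π'`. If `δ` solves `π' = πσ`, then `σδ` solves `π`, so `I` satisfies `Cσδ`;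
every literal of `Cσδ` is a literal of `C'δ`, hence `I` satisfies `C'δ` as well. -/

def Subst.comp (σ δ : Subst S) : Subst S := fun x => (σ x).subst δ

theorem Term.subst_app (σ : Subst S) (f : S.Func) (ts : List (Term S)) :
    (Term.app f ts).subst σ = .app f (ts.map (Term.subst σ)) := by
  rw [Term.subst]; simp

theorem Term.varList_app (f : S.Func) (ts : List (Term S)) :
    (Term.app f ts).varList = (ts.map Term.varList).flatten := by
  rw [Term.varList]; simp

theorem Term.subst_subst (σ δ : Subst S) (t : Term S) :
    (t.subst σ).subst δ = t.subst (Subst.comp σ δ) := by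
  induction t using Term.rec
    (motive_2 := fun ts => ∀ t ∈ ts, (t.subst σ).subst δ = t.subst (Subst.comp σ δ))
  case var x => simp [Term.subst, Subst.comp]
  case app f ts ih =>
    rw [Term.subst_app, Term.subst_app, Term.subst_app, List.map_map]
    exact congrArg _ (List.map_congr_left ih)
  case nil t ht => simp at ht
  case cons ih ihs u hu => exact (List.mem_cons.mp hu).elim (· ▸ ih) (ihs u)

theorem Term.isGround_subst {δ : Subst S} (hδ : IsGroundSubst δ) (t : Term S) :
    (t.subst δ).IsGround := by
  induction t using Term.rec (motive_2 := fun ts => ∀ t ∈ ts, (t.subst δ).IsGround)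
  case var x => rw [Term.subst]; exact hδ x
  case app f ts ih =>
    rw [Term.IsGround, Term.subst_app, Term.varList_app, List.map_map,
      List.flatten_eq_nil_iff]
    exact List.forall_mem_map.mpr ih
  case nil t ht => simp at ht
  case cons ih ihs u hu => exact (List.mem_cons.mp hu).elim (· ▸ ih) (ihs u)

theorem IsGroundSubst.comp {δ : Subst S} (hδ : IsGroundSubst δ) (σ : Subst S) :
    IsGroundSubst (Subst.comp σ δ) :=
  fun x => Term.isGround_subst hδ (σ x)

theorem Atom.subst_subst (σ δ : Subst S) (A : Atom S) :
    (A.subst σ).subst δ = A.subst (Subst.comp σ δ) := by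
  simp only [Atom.subst, List.map_map]
  exact congrArg _ (List.map_congr_left fun t _ => Term.subst_subst σ δ t)

theorem Solves.comp_of_subst {σ δ : Subst S} {π : Constr S} (h : Solves δ (π.subst σ)) :
    Solves (Subst.comp σ δ) π := by
  cases π with
  | bot => exact h.elim
  | conj cs =>
    obtain ⟨hground, hsol⟩ := h
    refine ⟨hground.comp σ, fun c hc => ?_⟩
    rw [← Term.subst_subst]
    exact hsol (c.1.subst σ, c.2) (List.mem_map_of_mem hc)

theorem Atom.map_subst_comp_subset {σ : Subst S} {M N : Multiset (Atom S)}
    (h : ∀ A ∈ M, A.subst σ ∈ N) (δ : Subst S) :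
    M.map (Atom.subst (Subst.comp σ δ)) ⊆ N.map (Atom.subst δ) := by
  intro B hB
  obtain ⟨A, hA, rfl⟩ := Multiset.mem_map.mp hB
  rw [← Atom.subst_subst]
  exact Multiset.mem_map_of_mem _ (h A hA)

theorem SatGround.mono {I : HIntp S} {C D : Clause S} (hante : C.ante ⊆ D.ante)
    (hsucc : C.succ ⊆ D.succ) : SatGround I C → SatGround I D
  | .inl ⟨A, hA, hAI⟩ => .inl ⟨A, hsucc hA, hAI⟩
  | .inr ⟨A, hA, hAI⟩ => .inr ⟨A, hante hA, hAI⟩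

/-- **Condensation entailment.**
If the constrained clause `(C';π')` is a condensation of the constrained
clause `(C;π)`, then `(C;π)` entails `(C';π')`: every Herbrand interpretation
satisfying `(C;π)` also satisfies `(C';π')`. -/
theorem condensation_entails
    (c c' : CClause S) (h : Condensation c' c)
    (I : HIntp S) (hI : SatCC I c) :
    SatCC I c' := by
  obtain ⟨-, σ, hπ, -, hante, hsucc⟩ := h
  have maps_into {M N : Multiset (Atom S)} (hMN : ∀ A ∈ M, ∃ A' ∈ N, A.subst σ = A') :
      ∀ A ∈ M, A.subst σ ∈ N := fun A hA => by
    obtain ⟨_, hA', rfl⟩ := hMN A hA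
    exact hA'
  rintro _ ⟨δ, hδ, rfl⟩
  rw [← hπ] at hδ
  have hsat : SatGround I (c.1.subst (Subst.comp σ δ)) := hI _ ⟨_, hδ.comp_of_subst, rfl⟩
  exact hsat.mono (Atom.map_subst_comp_subset (maps_into hante) δ)
    (Atom.map_subst_comp_subset (maps_into hsucc) δ)

end SDCPaper
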